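/- For any nonnegative vector z⁺ on [n] with Σ_{j=1}^{J} Σ_{i ∈ B_j(z⁺)} z⁺(i) ≥ 3/5 where J = log₂(n/32), the following holds: if j is chosen uniformly at random from {1,...,J} and then a set S ⊆ [n] is formed by including each element independently with probability 2^{-j}, then with probability at least 3/(20·J) there exists i ∈ S with z⁺(i) ≥ 2^{-j}. -/

import Mathlib

/-!
Let `p = 2⁻ʲ`. A `p`-random set misses every `i` with `z i ≥ p` with probability
`(1 - p) ^ a ≤ exp (-p a) ≤ 1 / (1 + p a)`, where `a` is the number of such `i`. The bucket
`B_j` consists of such `i` with `z i < 2p`, so its mass `m_j` satisfies `m_j ≤ 2 p a`, and the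
hitting probability for scale `j` is at least `m_j / (2 + m_j)`. Finally
`∑ m_j / (2 + m_j) ≥ M / (2 + M) ≥ 3/20` for the total mass `M = ∑ m_j ≥ 3/5`.
-/

open scoped Classical BigOperators

open Finset

section RandomSubset

variable {α : Type*} [Fintype α]

theorem sum_pow_mul_pow_mul_ite_forall_not (p : ℝ) (P : α → Prop) [DecidablePred P] :
    ∑ S : Finset α, p ^ #S * (1 - p) ^ (Fintype.card α - #S) *
        (if ∀ i ∈ S, ¬ P i then 1 else 0) = (1 - p) ^ #{i | P i} := by
  have hfilter :
      ({S | ∀ i ∈ S, ¬ P i} : Finset (Finset α)) = (filter (¬ P ·) univ).powerset := by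
    ext S; simp [subset_iff]
  have hcard : #{i | P i} + #{i | ¬ P i} = Fintype.card α := card_filter_add_card_filter_not _
  simp only [mul_ite, mul_one, mul_zero]
  rw [← sum_filter, hfilter]
  calc ∑ S ∈ (filter (¬ P ·) univ).powerset, p ^ #S * (1 - p) ^ (Fintype.card α - #S)
      = ∑ S ∈ (filter (¬ P ·) univ).powerset,
          p ^ #S * (1 - p) ^ (#{i | ¬ P i} - #S) * (1 - p) ^ #{i | P i} := by
        refine sum_congr rfl fun S hS => ?_
        have hS : #S ≤ #{i | ¬ P i} := card_le_card (mem_powerset.mp hS)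
        rw [← hcard, mul_assoc, ← pow_add]
        congr 2
        omega
    _ = (1 - p) ^ #{i | P i} := by
        rw [← sum_mul, sum_pow_mul_eq_add_pow, add_sub_cancel, one_pow, one_mul]

theorem sum_pow_mul_pow_mul_ite_exists (p : ℝ) (P : α → Prop) [DecidablePred P] :
    ∑ S : Finset α, p ^ #S * (1 - p) ^ (Fintype.card α - #S) *
        (if ∃ i ∈ S, P i then 1 else 0) = 1 - (1 - p) ^ #{i | P i} := by
  have hite : ∀ S : Finset α,
      (if ∃ i ∈ S, P i then (1 : ℝ) else 0) = 1 - if ∀ i ∈ S, ¬ P i then 1 else 0 := by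
    intro S
    by_cases h : ∃ i ∈ S, P i
    · obtain ⟨i, hiS, hPi⟩ := h
      rw [if_pos ⟨i, hiS, hPi⟩, if_neg fun hall => hall i hiS hPi, sub_zero]
    · rw [if_neg h, if_pos fun i hiS hPi => h ⟨i, hiS, hPi⟩, sub_self]
  simp only [hite, mul_sub, mul_one, sum_sub_distrib, sum_pow_mul_pow_mul_ite_forall_not,
    Fintype.sum_pow_mul_eq_add_pow, add_sub_cancel, one_pow]

end RandomSubset

theorem div_two_add_le_one_sub_pow {p m : ℝ} {a : ℕ} (hp0 : 0 ≤ p) (hp1 : p ≤ 1)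
    (hm0 : 0 ≤ m) (hm : m ≤ 2 * (p * a)) : m / (2 + m) ≤ 1 - (1 - p) ^ a := by
  have hpa : 0 ≤ p * a := by positivity
  have hmiss : (1 - p) ^ a ≤ 2 / (2 + m) :=
    calc (1 - p) ^ a ≤ Real.exp (-p) ^ a :=
          pow_le_pow_left₀ (by linarith) (Real.one_sub_le_exp_neg p) a
      _ = 1 / Real.exp (p * a) := by
          rw [← Real.exp_nat_mul, mul_neg, Real.exp_neg, mul_comm, one_div]
      _ ≤ 1 / (p * a + 1) := one_div_le_one_div_of_le (by positivity) (Real.add_one_le_exp _)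
      _ ≤ 2 / (2 + m) := by rw [div_le_div_iff₀ (by positivity) (by positivity)]; linarith
  have hsplit : m / (2 + m) = 1 - 2 / (2 + m) := by field_simp; ring
  linarith

theorem div_add_sum_le_sum_div_add {ι : Type*} (s : Finset ι) (m : ι → ℝ) {c : ℝ}
    (hc : 0 < c) (hm : ∀ j ∈ s, 0 ≤ m j) :
    (∑ j ∈ s, m j) / (c + ∑ j ∈ s, m j) ≤ ∑ j ∈ s, m j / (c + m j) := by
  rw [sum_div]
  refine sum_le_sum fun j hj => div_le_div_of_nonneg_left (hm j hj) (by linarith [hm j hj]) ?_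
  linarith [single_le_sum hm hj]

section Buckets

variable {α : Type*} [Fintype α]

noncomputable def bucket (z : α → ℝ) (j : ℕ) : Finset α :=
  univ.filter fun i => (1:ℝ)/2^j ≤ z i ∧ z i < (1:ℝ)/2^(j-1)

theorem bucket_mass_nonneg (z : α → ℝ) (j : ℕ) : 0 ≤ ∑ i ∈ bucket z j, z i :=
  sum_nonneg fun i hi => le_trans (by positivity) (mem_filter.mp hi).2.1

theorem one_div_two_pow_pred_le (j : ℕ) : (1:ℝ)/2^(j-1) ≤ 2 * (1/2^j) := by
  rw [mul_one_div, div_le_div_iff₀ (by positivity) (by positivity), one_mul]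
  calc (2:ℝ)^j ≤ 2^(j-1+1) := pow_le_pow_right₀ (by norm_num) (by omega)
    _ = 2 * 2^(j-1) := by ring

theorem bucket_mass_div_le_sum_hit (z : α → ℝ) (j : ℕ) :
    (∑ i ∈ bucket z j, z i) / (2 + ∑ i ∈ bucket z j, z i) ≤
      ∑ S : Finset α, ((1:ℝ)/2^j)^#S * (1 - (1:ℝ)/2^j)^(Fintype.card α - #S) *
        (if ∃ i ∈ S, (1:ℝ)/2^j ≤ z i then 1 else 0) := by
  set p : ℝ := 1/2^j
  have hp1 : p ≤ 1 := div_le_one_of_le₀ (one_le_pow₀ (by norm_num)) (by positivity)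
  rw [sum_pow_mul_pow_mul_ite_exists]
  refine div_two_add_le_one_sub_pow (by positivity) hp1 (bucket_mass_nonneg z j) ?_
  have hsub : bucket z j ⊆ ({i | p ≤ z i} : Finset α) := fun i hi =>
    mem_filter.mpr ⟨mem_univ i, (mem_filter.mp hi).2.1⟩
  calc ∑ i ∈ bucket z j, z i ≤ #(bucket z j) • (2 * p) := by
        refine sum_le_card_nsmul _ _ _ fun i hi => ?_
        exact (mem_filter.mp hi).2.2.le.trans (one_div_two_pow_pred_le j)
    _ ≤ 2 * (p * #{i | p ≤ z i}) := by
        rw [nsmul_eq_mul, mul_comm, mul_assoc]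
        gcongr

end Buckets

theorem uniform_key_lemma_general (n J : ℕ)
    (z : Fin n → ℝ)
    (hmass : ∑ j ∈ Finset.Icc 1 J,
        ∑ i ∈ Finset.univ.filter
          (fun i => (1:ℝ)/2^j ≤ z i ∧ z i < (1:ℝ)/2^(j-1)), z i ≥ 3/5) :
    (1/(J:ℝ)) * ∑ j ∈ Finset.Icc 1 J,
        ∑ S : Finset (Fin n),
          ((1:ℝ)/2^j)^S.card * (1 - (1:ℝ)/2^j)^(n - S.card) *
            (if ∃ i ∈ S, (1:ℝ)/2^j ≤ z i then 1 else 0)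
      ≥ 3 / (20 * (J:ℝ)) := by
  set M := ∑ j ∈ Icc 1 J, ∑ i ∈ bucket z j, z i
  have hM_ge : 3 / 5 ≤ M := hmass
  have hM : 3 / 20 ≤ M / (2 + M) := by
    rw [le_div_iff₀ (by linarith)]; linarith
  calc 3 / (20 * (J:ℝ)) = 1 / J * (3 / 20) := by ring
    _ ≤ 1 / J * ∑ j ∈ Icc 1 J,
          (∑ i ∈ bucket z j, z i) / (2 + ∑ i ∈ bucket z j, z i) := by
        gcongr
        exact hM.trans (div_add_sum_le_sum_div_add _ _ two_pos fun j _ => bucket_mass_nonneg z j)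
    _ ≤ _ := by
        gcongr with j
        refine (bucket_mass_div_le_sum_hit z j).trans_eq ?_
        simp only [Fintype.card_fin]
        congr!

theorem uniform_key_lemma (n J : ℕ) (hJ : 1 ≤ J) (hJpow : (2:ℝ)^J = (n:ℝ)/32)
    (z : Fin n → ℝ) (hz : ∀ i, 0 ≤ z i)
    (hmass : ∑ j ∈ Finset.Icc 1 J,
        ∑ i ∈ Finset.univ.filter
          (fun i => (1:ℝ)/2^j ≤ z i ∧ z i < (1:ℝ)/2^(j-1)), z i ≥ 3/5) :
    (1/(J:ℝ)) * ∑ j ∈ Finset.Icc 1 J,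
        ∑ S : Finset (Fin n),
          ((1:ℝ)/2^j)^S.card * (1 - (1:ℝ)/2^j)^(n - S.card) *
            (if ∃ i ∈ S, (1:ℝ)/2^j ≤ z i then 1 else 0)
      ≥ 3 / (20 * (J:ℝ)) :=
  uniform_key_lemma_general n J z hmass
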